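/- More generally, for odd ℓ, every antisymmetric polynomial P ∈ ℂ[z₁,…,z_N] that vanishes to order at least ℓ on each diagonal {z_i = z_j} (i ≠ j) is divisible by ∏_{1≤i<j≤N} (z_i − z_j)^ℓ, with symmetric quotient. -/

import Mathlib

/-! The factors `X i - X j` with `i < j` are pairwise non-associated primes of the factorial ring
`ℂ[z₁, …, z_N]`, so the divisibility hypotheses give `P = D * Q` with `D = ∏_{i<j} (X i - X j)^ℓ`.
Up to a sign, `∏_{i<j} (X i - X j)` is the Vandermonde determinant, whose rows are permuted by
renaming the variables; hence `D` is antisymmetric for odd `ℓ`, and cancelling the nonzero `D`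
from `rename σ P = sign σ • P` shows that `Q` is symmetric. -/

open Finset MvPolynomial

theorem Finset.prod_filter_lt_eq_prod_Ioi {ι M : Type*} [CommMonoid M] [Fintype ι] [LinearOrder ι]
    [LocallyFiniteOrderTop ι] (f : ι → ι → M) :
    ∏ p ∈ univ.filter (fun p : ι × ι => p.1 < p.2), f p.1 p.2 = ∏ i, ∏ j ∈ Ioi i, f i j := by
  simp_rw [prod_filter, Fintype.prod_prod_type, ← prod_filter, filter_lt_eq_Ioi]

namespace MvPolynomial
variable {σ R : Type*} [CommRing R]

theorem prime_X_sub_X [IsDomain R] {i j : σ} (hij : i ≠ j) :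
    Prime (X i - X j : MvPolynomial σ R) := by
  classical
  let e := (renameEquiv R (Equiv.optionSubtypeNe i).symm).trans
    (optionEquivLeft R {k // k ≠ i})
  have he : e (X i - X j) = Polynomial.X - Polynomial.C (X ⟨j, hij.symm⟩) := by
    simp [e, Equiv.optionSubtypeNe_symm_of_ne hij.symm]
  rw [← MulEquiv.prime_iff e.toMulEquiv]
  exact he ▸ Polynomial.prime_X_sub_C _

theorem eq_or_eq_of_X_sub_X_dvd [Nontrivial R] {i j k m : σ} (hkm : k ≠ m)
    (h : (X i - X j : MvPolynomial σ R) ∣ X k - X m) : k = i ∨ k = j := by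
  classical
  by_contra! hk
  -- at the indicator of `k`, `X i - X j` vanishes while `X k - X m` does not
  have := map_dvd (eval (Pi.single k 1)) h
  simp [hk.1.symm, hk.2.symm, hkm.symm] at this

theorem eq_of_X_sub_X_dvd [Nontrivial R] [LinearOrder σ] {i j k m : σ} (hij : i < j)
    (hkm : k < m) (h : (X i - X j : MvPolynomial σ R) ∣ X k - X m) : i = k ∧ j = m := by
  have hk := eq_or_eq_of_X_sub_X_dvd hkm.ne h
  have hm := eq_or_eq_of_X_sub_X_dvd hkm.ne' (dvd_sub_comm.mp h)
  grind

theorem prod_X_sub_X_pow_dvd [IsDomain R] [UniqueFactorizationMonoid R] [Fintype σ]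
    [LinearOrder σ] {ℓ : ℕ} {P : MvPolynomial σ R}
    (h : ∀ i j, i ≠ j → (X i - X j) ^ ℓ ∣ P) :
    (∏ p ∈ univ.filter (fun p : σ × σ => p.1 < p.2), (X p.1 - X p.2) ^ ℓ) ∣ P := by
  refine Finset.prod_dvd_of_isRelPrime ?_ fun p hp => h _ _ (mem_filter.mp hp).2.ne
  intro p hp q hq hpq
  have hp_lt := (mem_filter.mp hp).2
  have hq_lt := (mem_filter.mp hq).2
  refine IsRelPrime.pow ((prime_X_sub_X hp_lt.ne).irreducible.isRelPrime_iff_not_dvd.mpr ?_)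
  intro hdvd
  obtain ⟨h1, h2⟩ := eq_of_X_sub_X_dvd hp_lt hq_lt hdvd
  exact hpq (Prod.ext h1 h2)

theorem rename_det_vandermonde_X {N : ℕ} (τ : Equiv.Perm (Fin N)) :
    rename τ (Matrix.vandermonde (X : Fin N → MvPolynomial (Fin N) R)).det =
      (Equiv.Perm.sign τ : ℤ) • (Matrix.vandermonde X).det := by
  have hmap : (Matrix.vandermonde X).map (rename τ) =
      (Matrix.vandermonde (X : Fin N → MvPolynomial (Fin N) R)).submatrix τ id := by
    ext a b
    simp [Matrix.vandermonde]
  rw [AlgHom.map_det, AlgHom.mapMatrix_apply, hmap, Matrix.det_permute, zsmul_eq_mul]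

theorem rename_prod_X_sub_X {N : ℕ} (τ : Equiv.Perm (Fin N)) :
    rename τ (∏ p ∈ univ.filter (fun p : Fin N × Fin N => p.1 < p.2),
        (X p.1 - X p.2 : MvPolynomial (Fin N) R)) =
      (Equiv.Perm.sign τ : ℤ) • ∏ p ∈ univ.filter (fun p : Fin N × Fin N => p.1 < p.2),
        (X p.1 - X p.2 : MvPolynomial (Fin N) R) := by
  have hV : ∏ p ∈ univ.filter (fun p : Fin N × Fin N => p.1 < p.2),
      (X p.1 - X p.2 : MvPolynomial (Fin N) R) =
        (-1) ^ #(univ.filter (fun p : Fin N × Fin N => p.1 < p.2)) *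
          (Matrix.vandermonde (X : Fin N → MvPolynomial (Fin N) R)).det := by
    rw [Matrix.det_vandermonde, ← prod_filter_lt_eq_prod_Ioi, ← prod_neg]
    simp_rw [neg_sub]
  rw [hV, map_mul, rename_det_vandermonde_X, mul_smul_comm, map_pow, map_neg, map_one]

theorem rename_prod_X_sub_X_pow {N ℓ : ℕ} (hℓ : Odd ℓ) (τ : Equiv.Perm (Fin N)) :
    rename τ (∏ p ∈ univ.filter (fun p : Fin N × Fin N => p.1 < p.2),
        (X p.1 - X p.2 : MvPolynomial (Fin N) R) ^ ℓ) =
      (Equiv.Perm.sign τ : ℤ) • ∏ p ∈ univ.filter (fun p : Fin N × Fin N => p.1 < p.2),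
        (X p.1 - X p.2 : MvPolynomial (Fin N) R) ^ ℓ := by
  have hsign : (Equiv.Perm.sign τ : ℤ) ^ ℓ = Equiv.Perm.sign τ := by
    rw [← Units.val_pow_eq_pow_val, Int.units_pow_eq_pow_mod_two, Nat.odd_iff.mp hℓ, pow_one]
  rw [prod_pow, map_pow, rename_prod_X_sub_X, smul_pow, hsign]

end MvPolynomial

theorem antisymmetric_divisible_by_laughlin_factor_general
    (N : ℕ) (ℓ : ℕ) (hℓ : Odd ℓ)
    (P : MvPolynomial (Fin N) ℂ)
    (hP : ∀ σ : Equiv.Perm (Fin N),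
      MvPolynomial.rename σ P = (Equiv.Perm.sign σ : ℤ) • P)
    (hvanish : ∀ i j : Fin N, i ≠ j → (X i - X j) ^ ℓ ∣ P) :
    ∃ Q : MvPolynomial (Fin N) ℂ,
      (∀ σ : Equiv.Perm (Fin N), MvPolynomial.rename σ Q = Q) ∧
      P = Q * ∏ p ∈ Finset.univ.filter (fun p : Fin N × Fin N => p.1 < p.2),
              (X p.1 - X p.2) ^ ℓ := by
  obtain ⟨Q, hQ⟩ := prod_X_sub_X_pow_dvd hvanish
  refine ⟨Q, fun σ => ?_, hQ.trans (mul_comm _ _)⟩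
  have hD : ∏ p ∈ univ.filter (fun p : Fin N × Fin N => p.1 < p.2),
      (X p.1 - X p.2 : MvPolynomial (Fin N) ℂ) ^ ℓ ≠ 0 :=
    prod_ne_zero_iff.mpr fun p hp => pow_ne_zero _ (prime_X_sub_X (mem_filter.mp hp).2.ne).ne_zero
  have h := congrArg (rename σ) hQ
  rw [hP, map_mul, rename_prod_X_sub_X_pow hℓ, smul_mul_assoc, ← Units.smul_def,
    ← Units.smul_def, smul_left_cancel_iff, hQ] at h
  exact (mul_left_cancel₀ hD h).symm

/-- For odd ℓ, every antisymmetric polynomial vanishing to order at least ℓ on each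
diagonal {z_i = z_j} is divisible by ∏_{i<j}(z_i − z_j)^ℓ with symmetric quotient. -/
theorem antisymmetric_divisible_by_laughlin_factor
    (N : ℕ) (hN : 2 ≤ N) (ℓ : ℕ) (hℓpos : 0 < ℓ) (hℓ : Odd ℓ)
    (P : MvPolynomial (Fin N) ℂ)
    (hP : ∀ σ : Equiv.Perm (Fin N),
      MvPolynomial.rename σ P = (Equiv.Perm.sign σ : ℤ) • P)
    (hvanish : ∀ i j : Fin N, i ≠ j → (X i - X j) ^ ℓ ∣ P) :
    ∃ Q : MvPolynomial (Fin N) ℂ,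
      (∀ σ : Equiv.Perm (Fin N), MvPolynomial.rename σ Q = Q) ∧
      P = Q * ∏ p ∈ Finset.univ.filter (fun p : Fin N × Fin N => p.1 < p.2),
              (X p.1 - X p.2) ^ ℓ :=
  antisymmetric_divisible_by_laughlin_factor_general N ℓ hℓ P hP hvanish
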